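/- Let G be a finite acyclic digraph with root r (unique vertex of indegree 0) and nonnegative edge weights w. Then the maximum value of a weighted packing of spanning r-arborescences in G equals the minimum over vertices v ≠ r of w(δ⁻(v)). -/

import Mathlib

/-!
Every spanning `r`-arborescence has exactly one edge entering a vertex `v ≠ r`, so summing the
capacity constraints over `δ⁻(v)` bounds the value of any packing by `w(δ⁻(v))`.

Conversely let `μ` be the least of these in-weights. Pick, independently for every `v ≠ r`, an
edge entering `v` with probability proportional to its weight. In an acyclic digraph any such
choice of parents is a spanning `r`-arborescence, since following parents from `v` descends in
the well-founded order `TransGen D` and can only stop at `r`. Weighting each choice by `μ` times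
its probability gives a packing of value `μ` which uses the edge `(u, v)` with total weight
`μ · w(u, v) / w(δ⁻(v)) ≤ w(u, v)`.
-/

open scoped Classical

open Relation

theorem Fintype.sum_ite_apply_eq_mul_prod_sum {ι α R : Type*} [Fintype ι] [DecidableEq ι]
    [Fintype α] [DecidableEq α] [CommSemiring R] (F : ι → α → R) (s : ι) (a : α) :
    ∑ p : ι → α, (if p s = a then ∏ i, F i (p i) else 0) =
      F s a * ∏ i ∈ Finset.univ.erase s, ∑ b, F i b := by
  set G : ι → α → R := fun i b => if i = s ∧ b ≠ a then 0 else F i b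
  have hG : ∀ p : ι → α, (if p s = a then ∏ i, F i (p i) else 0) = ∏ i, G i (p i) := by
    intro p
    split_ifs with hp
    · refine Finset.prod_congr rfl fun i _ => (if_neg ?_).symm
      rintro ⟨rfl, h⟩
      exact h hp
    · exact (Finset.prod_eq_zero (f := fun i => G i (p i)) (Finset.mem_univ s)
        (if_pos ⟨rfl, hp⟩)).symm
  have hGs : ∑ b, G s b = F s a := by
    rw [Fintype.sum_eq_single a fun b hb => if_pos ⟨rfl, hb⟩, if_neg fun h => h.2 rfl]
  have hGi : ∀ i ∈ Finset.univ.erase s, ∑ b, G i b = ∑ b, F i b := fun i hi =>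
    Finset.sum_congr rfl fun b _ => if_neg fun h => Finset.ne_of_mem_erase hi h.1
  rw [Finset.sum_congr rfl fun p _ => hG p, ← Fintype.prod_sum,
    ← Finset.mul_prod_erase Finset.univ _ (Finset.mem_univ s), hGs, Finset.prod_congr rfl hGi]

section Arborescence

variable {V : Type*} (D : V → V → Prop) (r : V)

def IsSpanningArborescence (A : V → V → Prop) : Prop :=
  (∀ u v, A u v → D u v) ∧ (∀ v, v ≠ r → ∃! u, A u v) ∧ (∀ u, ¬ A u r) ∧
    ∀ v, ReflTransGen A r v

def parentRel (p : {v // v ≠ r} → V) (u v : V) : Prop :=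
  ∃ h : v ≠ r, p ⟨v, h⟩ = u

variable {D r}

theorem isSpanningArborescence_parentRel [Finite V] (hD : ∀ v, ¬ TransGen D v v)
    {p : {v // v ≠ r} → V} (hp : ∀ v, D (p v) v) :
    IsSpanningArborescence D r (parentRel r p) := by
  have : IsTrans V (TransGen D) := ⟨fun _ _ _ => TransGen.trans⟩
  have : Std.Irrefl (TransGen D) := ⟨hD⟩
  refine ⟨?_, fun v hv => ⟨p ⟨v, hv⟩, ⟨hv, rfl⟩, fun u ⟨_, hu⟩ => hu.symm⟩,
    fun u ⟨h, _⟩ => h rfl, fun v => ?_⟩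
  · rintro u v ⟨h, rfl⟩
    exact hp _
  induction v using (Finite.wellFounded_of_trans_of_irrefl (TransGen D)).induction with
  | _ v ih =>
    by_cases hv : v = r
    · subst hv
      exact .refl
    · exact (ih _ (.single (hp ⟨v, hv⟩))).tail ⟨hv, rfl⟩

variable (D r) (w : V → V → ℝ)

def packingValues : Set ℝ :=
  {x | ∃ (t : ℕ) (lam : Fin t → ℝ) (A : Fin t → V → V → Prop),
    (∀ i, 0 ≤ lam i) ∧ (∀ i, IsSpanningArborescence D r (A i)) ∧
    (∀ u v, D u v → ∑ i, (if A i u v then lam i else 0) ≤ w u v) ∧ x = ∑ i, lam i}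

variable {D r w}

theorem sum_mem_packingValues {ι : Type*} [Fintype ι] {lam : ι → ℝ} {A : ι → V → V → Prop}
    (hlam : ∀ i, 0 ≤ lam i) (hA : ∀ i, IsSpanningArborescence D r (A i))
    (hcap : ∀ u v, D u v → ∑ i, (if A i u v then lam i else 0) ≤ w u v) :
    ∑ i, lam i ∈ packingValues D r w := by
  let e := (Fintype.equivFin ι).symm
  refine ⟨_, lam ∘ e, A ∘ e, fun i => hlam _, fun i => hA _, fun u v huv => ?_,
    (e.sum_comp lam).symm⟩
  exact (e.sum_comp fun i => if A i u v then lam i else 0).trans_le (hcap u v huv)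

variable [Fintype V] (D w)

noncomputable def inWeight (v : V) : ℝ :=
  ∑ u, if D u v then w u v else 0

noncomputable def inShare (u v : V) : ℝ :=
  (if D u v then w u v else 0) / inWeight D w v

noncomputable def parentProb (p : {v // v ≠ r} → V) : ℝ :=
  ∏ v, inShare D w (p v) v

variable {D w}

theorem inWeight_nonneg (hw : ∀ u v, 0 ≤ w u v) (v : V) : 0 ≤ inWeight D w v :=
  Finset.sum_nonneg fun u _ => by split_ifs <;> simp [hw]

theorem sum_le_inWeight {ι : Type*} [Fintype ι] {lam : ι → ℝ} {A : ι → V → V → Prop} {v : V}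
    (hAD : ∀ i u, A i u v → D u v) (hv : ∀ i, ∃! u, A i u v)
    (hcap : ∀ u, D u v → ∑ i, (if A i u v then lam i else 0) ≤ w u v) :
    ∑ i, lam i ≤ inWeight D w v := by
  have hsingle : ∀ i, ∑ u, (if A i u v then lam i else 0) = lam i := by
    intro i
    obtain ⟨u₀, hu₀, huniq⟩ := hv i
    rw [Fintype.sum_eq_single u₀ fun u hu => if_neg fun h => hu (huniq u h), if_pos hu₀]
  calc ∑ i, lam i = ∑ u, ∑ i, (if A i u v then lam i else 0) := by
        rw [Finset.sum_comm]
        exact (Finset.sum_congr rfl fun i _ => hsingle i).symm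
    _ ≤ ∑ u, if D u v then w u v else 0 := Finset.sum_le_sum fun u _ => by
        split_ifs with huv
        · exact hcap u huv
        · exact (Finset.sum_eq_zero fun i _ => if_neg fun h => huv (hAD i u h)).le

theorem le_inWeight_of_mem_packingValues {x : ℝ} (hx : x ∈ packingValues D r w) {v : V}
    (hv : v ≠ r) : x ≤ inWeight D w v := by
  obtain ⟨t, lam, A, -, hA, hcap, rfl⟩ := hx
  exact sum_le_inWeight (fun i u => (hA i).1 u v) (fun i => (hA i).2.1 v hv)
    fun u => hcap u v

theorem inShare_nonneg (hw : ∀ u v, 0 ≤ w u v) (u v : V) : 0 ≤ inShare D w u v :=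
  div_nonneg (by split_ifs <;> simp [hw]) (inWeight_nonneg hw v)

theorem sum_inShare {v : V} (hv : inWeight D w v ≠ 0) : ∑ u, inShare D w u v = 1 := by
  unfold inShare
  rw [← Finset.sum_div]
  exact div_self hv

theorem sum_parentProb (hpos : ∀ v, v ≠ r → inWeight D w v ≠ 0) :
    ∑ p : {v // v ≠ r} → V, parentProb D w p = 1 := by
  unfold parentProb
  rw [← Fintype.prod_sum fun (v : {v // v ≠ r}) u => inShare D w u v]
  exact Finset.prod_eq_one fun v _ => sum_inShare (hpos v v.2)

theorem sum_ite_apply_eq_parentProb (hpos : ∀ v, v ≠ r → inWeight D w v ≠ 0)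
    (v : {v // v ≠ r}) (u : V) :
    ∑ p, (if p v = u then parentProb D w p else 0) = inShare D w u v := by
  unfold parentProb
  rw [Fintype.sum_ite_apply_eq_mul_prod_sum fun (v : {v // v ≠ r}) u => inShare D w u v,
    Finset.prod_eq_one, mul_one]
  exact fun v' _ => sum_inShare (hpos v' v'.2)

theorem parentProb_eq_zero {p : {v // v ≠ r} → V} (hp : ¬ ∀ v, D (p v) v) :
    parentProb D w p = 0 := by
  push Not at hp
  obtain ⟨v, hv⟩ := hp
  exact Finset.prod_eq_zero (Finset.mem_univ v) (by rw [inShare, if_neg hv, zero_div])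

theorem mul_inShare_le (hw : ∀ u v, 0 ≤ w u v) {μ : ℝ} {v : V} (hμ : μ ≤ inWeight D w v)
    (u : V) : μ * inShare D w u v ≤ w u v := by
  rcases (inWeight_nonneg hw v).eq_or_lt with h | h
  · rw [inShare, ← h, div_zero, mul_zero]
    exact hw u v
  rw [inShare, ← mul_div_assoc, div_le_iff₀ h]
  split_ifs
  · rw [mul_comm]
    exact mul_le_mul_of_nonneg_left hμ (hw u v)
  · simpa using mul_nonneg (hw u v) h.le

theorem sum_subtype_mul_parentProb (g : ({v // v ≠ r} → V) → ℝ) :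
    ∑ q : {p : {v // v ≠ r} → V // ∀ v, D (p v) v}, g q * parentProb D w q.1 =
      ∑ p, g p * parentProb D w p := by
  rw [← Finset.sum_subtype _ Finset.mem_filter_univ fun p => g p * parentProb D w p]
  refine Finset.sum_filter_of_ne fun p _ hp => ?_
  by_contra h
  exact hp (by rw [parentProb_eq_zero h, mul_zero])

theorem mem_packingValues (hD : ∀ v, ¬ TransGen D v v) (hw : ∀ u v, 0 ≤ w u v) {μ : ℝ}
    (hμ : 0 ≤ μ) (hle : ∀ v, v ≠ r → μ ≤ inWeight D w v) : μ ∈ packingValues D r w := by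
  rcases hμ.eq_or_lt with rfl | hμpos
  · exact ⟨0, Fin.elim0, Fin.elim0, fun i => i.elim0, fun i => i.elim0,
      fun u v _ => by simpa using hw u v, by simp⟩
  have hpos : ∀ v, v ≠ r → inWeight D w v ≠ 0 := fun v hv => (hμpos.trans_le (hle v hv)).ne'
  have hval : ∑ q : {p : {v // v ≠ r} → V // ∀ v, D (p v) v}, μ * parentProb D w q.1 = μ := by
    rw [sum_subtype_mul_parentProb (fun _ => μ), ← Finset.mul_sum, sum_parentProb hpos, mul_one]
  refine hval ▸ sum_mem_packingValues
    (fun q => mul_nonneg hμ (Finset.prod_nonneg fun v _ => inShare_nonneg hw _ _))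
    (fun q => isSpanningArborescence_parentRel hD q.2) fun u v _ => ?_
  rcases eq_or_ne v r with rfl | hv
  · simpa [parentRel] using hw u v
  calc ∑ q : {p : {v // v ≠ r} → V // ∀ v, D (p v) v},
        (if parentRel r q.1 u v then μ * parentProb D w q.1 else 0)
      = ∑ p, (if p ⟨v, hv⟩ = u then μ else 0) * parentProb D w p := by
        rw [← sum_subtype_mul_parentProb]
        refine Finset.sum_congr rfl fun q _ => ?_
        simp only [parentRel, hv, ne_eq, not_false_eq_true, exists_true_left, ite_mul, zero_mul]
    _ = μ * inShare D w u v := by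
        rw [← sum_ite_apply_eq_parentProb hpos ⟨v, hv⟩ u, Finset.mul_sum]
        simp only [ite_mul, zero_mul, mul_ite, mul_zero]
    _ ≤ w u v := mul_inShare_le hw (hle v hv) u

end Arborescence

theorem stmt_7_general {V : Type*} [Fintype V] (D : V → V → Prop) (r : V) (w : V → V → ℝ)
    (hD : ∀ v, ¬ Relation.TransGen D v v)
    (hw : ∀ u v, 0 ≤ w u v) (hV : ∃ v, v ≠ r) :
    IsGreatest {x : ℝ | ∃ (t : ℕ) (lam : Fin t → ℝ) (A : Fin t → V → V → Prop),
        (∀ i, 0 ≤ lam i) ∧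
        (∀ i, (∀ u v, A i u v → D u v) ∧ (∀ v, v ≠ r → ∃! u, A i u v) ∧
          (∀ u, ¬ A i u r) ∧ (∀ v, Relation.ReflTransGen (A i) r v)) ∧
        (∀ u v, D u v → ∑ i, (if A i u v then lam i else 0) ≤ w u v) ∧
        x = ∑ i, lam i}
      (sInf {x : ℝ | ∃ v : V, v ≠ r ∧ x = ∑ u : V, if D u v then w u v else 0}) := by
  obtain ⟨v, hv⟩ := hV
  obtain ⟨v₀, hv₀, hmin⟩ := Finset.exists_min_image {v | v ≠ r} (inWeight D w)
    ⟨v, (Finset.mem_filter_univ v).2 hv⟩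
  simp only [Finset.mem_filter_univ] at hv₀ hmin
  have hcut : sInf {x : ℝ | ∃ v : V, v ≠ r ∧ x = inWeight D w v} = inWeight D w v₀ :=
    IsLeast.csInf_eq ⟨⟨v₀, hv₀, rfl⟩, by
      rintro _ ⟨v, hv, rfl⟩
      exact hmin v hv⟩
  change IsGreatest (packingValues D r w) (sInf {x : ℝ | ∃ v : V, v ≠ r ∧ x = inWeight D w v})
  rw [hcut]
  exact ⟨mem_packingValues hD hw (inWeight_nonneg hw v₀) hmin,
    fun x hx => le_inWeight_of_mem_packingValues hx hv₀⟩

/-- In a finite acyclic digraph with unique source `r` and nonnegative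
weights, the maximum value of a weighted packing of spanning `r`-arborescences equals
the minimum over vertices `v ≠ r` of the total weight of edges entering `v`. -/
theorem stmt_7 {V : Type*} [Fintype V] (D : V → V → Prop) (r : V) (w : V → V → ℝ)
    (hD : ∀ v, ¬ Relation.TransGen D v v)
    (hroot : (∀ u, ¬ D u r) ∧ ∀ v, (∀ u, ¬ D u v) → v = r)
    (hw : ∀ u v, 0 ≤ w u v) (hV : ∃ v, v ≠ r) :
    IsGreatest {x : ℝ | ∃ (t : ℕ) (lam : Fin t → ℝ) (A : Fin t → V → V → Prop),
        (∀ i, 0 ≤ lam i) ∧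
        (∀ i, (∀ u v, A i u v → D u v) ∧ (∀ v, v ≠ r → ∃! u, A i u v) ∧
          (∀ u, ¬ A i u r) ∧ (∀ v, Relation.ReflTransGen (A i) r v)) ∧
        (∀ u v, D u v → ∑ i, (if A i u v then lam i else 0) ≤ w u v) ∧
        x = ∑ i, lam i}
      (sInf {x : ℝ | ∃ v : V, v ≠ r ∧ x = ∑ u : V, if D u v then w u v else 0}) :=
  stmt_7_general D r w hD hw hV
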